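/- arXiv:1306.5429 — 2 statements merged into one kernel-verified Lean document; each statement's English description precedes it below -/
import Mathlib

section
/- With b_n and B_n as above, for every n ≥ 1 the identity B_n(x) + b_n/(6x−1) = −(B_n(x) + b_n/(6x+1)) + (12(x+n)(x−1)(6x−5)/((x+n−1)(6x+1)(6x−1)))·(B_n(x−1) + b_n/(6x−5)) + 18(6n−1)·(2(x+n)/(x+n−1))·(B_{n−1}(x) + b_{n−1}/(6x−1)) holds in ℚ(x). -/
/-!
Peeling off the `j = 1` term of `B_{n+1}` and using `(p)_{[k+1]} = p·(p-1)_{[k]}` gives the recursion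
`B_{n+1}(x) = 18 b_n + 108 (x+n+1) B_n(x)`. Together with `(n+1) b_{n+1} = 3(6n+5)(6n+7) b_n` it yields,
by induction from `B_0 = 0`, the first-order functional equation
`(36x² - 1) B_n(x) - 36 (x+n)(x-1) B_n(x-1) = 6n b_n`.
After clearing denominators, the three-term identity is a linear combination of this functional
equation, the recursion and the recurrence for `b_n`.
-/

open Polynomial

/-- The odd double factorial: `oddFac k = (2k+1)!! = 1·3·5···(2k+1)`. -/
def oddFac (k : ℕ) : ℕ := ∏ i ∈ Finset.range (k+1), (2*i+1)

/-- `bSeq n = 2^n·(6n+1)!!/(2n)!` as a rational number. -/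
def bSeq (n : ℕ) : ℚ := 2^n * oddFac (3*n) / (2*n).factorial

/-- The falling factorial `(p)_{[j]} = p(p-1)···(p-j+1)` of a polynomial `p`, with
`(p)_{[0]} = 1`. -/
noncomputable def ff (p : Polynomial ℚ) (j : ℕ) : Polynomial ℚ :=
  ∏ i ∈ Finset.range j, (p - Polynomial.C (i : ℚ))

/-- The polynomial `B_n(x) = (1/6)·Σ_{j=1}^{n} 108^j·b_{n−j}·(x+n)_{[j−1]}`. -/
noncomputable def Bpoly (n : ℕ) : Polynomial ℚ :=
  Polynomial.C (1/6 : ℚ) *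
    ∑ j ∈ Finset.Icc 1 n,
      Polynomial.C ((108:ℚ)^j * bSeq (n-j)) * ff (Polynomial.X + Polynomial.C (n:ℚ)) (j-1)

noncomputable section

/-- The image of `B_n` in the field of rational functions `ℚ(x)`. -/
def Bf (n : ℕ) : RatFunc ℚ := algebraMap (Polynomial ℚ) (RatFunc ℚ) (Bpoly n)

/-- The image of `B_n(x+1)` in `ℚ(x)`. -/
def BfShiftUp (n : ℕ) : RatFunc ℚ :=
  algebraMap (Polynomial ℚ) (RatFunc ℚ) ((Bpoly n).comp (Polynomial.X + 1))

/-- The image of `B_n(x-1)` in `ℚ(x)`. -/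
def BfShiftDown (n : ℕ) : RatFunc ℚ :=
  algebraMap (Polynomial ℚ) (RatFunc ℚ) ((Bpoly n).comp (Polynomial.X - 1))

/-- The generator `x` of `ℚ(x)`. -/
def Xr : RatFunc ℚ := RatFunc.X

/-- Constant rational functions. -/
def cst (a : ℚ) : RatFunc ℚ := RatFunc.C a

end

lemma bSeq_succ (n : ℕ) : ((n : ℚ) + 1) * bSeq (n + 1) = 3 * (6 * n + 5) * (6 * n + 7) * bSeq n := by
  have hodd : oddFac (3 * (n + 1)) = oddFac (3 * n) * ((6 * n + 3) * (6 * n + 5) * (6 * n + 7)) := by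
    simp only [oddFac, show 3 * (n + 1) + 1 = 3 * n + 1 + 1 + 1 + 1 by ring, Finset.prod_range_succ]
    ring
  have hfac : (2 * (n + 1)).factorial = (2 * n).factorial * ((2 * n + 1) * (2 * n + 2)) := by
    rw [show 2 * (n + 1) = 2 * n + 1 + 1 by ring, Nat.factorial_succ, Nat.factorial_succ]
    ring
  have : ((2 * n).factorial : ℚ) ≠ 0 := by positivity
  rw [bSeq, bSeq, hodd, hfac]
  push_cast
  field_simp
  ring

lemma ff_succ (p : Polynomial ℚ) (k : ℕ) : ff p (k + 1) = p * ff (p - 1) k := by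
  rw [ff, ff, Finset.prod_range_succ']
  simp only [Nat.cast_add, Nat.cast_one, map_add, map_one, Nat.cast_zero, map_zero, sub_zero]
  rw [mul_comm]
  congr 1
  exact Finset.prod_congr rfl fun i _ => by ring

lemma Bpoly_eq_sum_range (n : ℕ) :
    Bpoly n = C (1 / 6 : ℚ) *
      ∑ k ∈ Finset.range n, C ((108 : ℚ) ^ (k + 1) * bSeq (n - 1 - k)) * ff (X + C (n : ℚ)) k := by
  rw [Bpoly, ← Finset.Ico_add_one_right_eq_Icc, Finset.sum_Ico_eq_sum_range, Nat.add_sub_cancel]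
  congr 1
  refine Finset.sum_congr rfl fun k _ => ?_
  rw [add_comm 1 k, Nat.add_sub_cancel, Nat.sub_sub, add_comm 1 k]

lemma Bpoly_succ (n : ℕ) :
    Bpoly (n + 1) = C (18 * bSeq n) + 108 * (X + C ((n : ℚ) + 1)) * Bpoly n := by
  rw [Bpoly_eq_sum_range, Bpoly_eq_sum_range, Finset.sum_range_succ']
  have hshift : X + C ((n : ℚ) + 1) - 1 = X + C (n : ℚ) := by rw [map_add, map_one]; ring
  have hff0 (p : Polynomial ℚ) : ff p 0 = 1 := Finset.prod_range_zero _
  simp only [ff_succ, hff0, Nat.cast_add, Nat.cast_one, hshift, Nat.add_sub_cancel, Nat.sub_zero,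
    Nat.sub_sub, add_comm 1, mul_one]
  rw [mul_add, Finset.mul_sum, Finset.mul_sum, add_comm, ← map_mul]
  congr 1
  · congr 1; ring
  · rw [Finset.mul_sum]
    exact Finset.sum_congr rfl fun k _ => by simp only [map_mul, map_pow, map_ofNat]; ring

theorem Bpoly_functional_eq (n : ℕ) :
    (36 * X ^ 2 - 1) * Bpoly n - 36 * (X + C (n : ℚ)) * (X - 1) * (Bpoly n).comp (X - 1)
      = C (6 * n * bSeq n) := by
  induction n with
  | zero => simp [Bpoly_eq_sum_range]
  | succ n ih =>
    have hb := congrArg C (bSeq_succ n)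
    rw [Bpoly_succ]
    simp only [add_comp, mul_comp, C_comp, X_comp, ofNat_comp] at ih hb ⊢
    simp only [map_mul, map_add, map_natCast, map_ofNat, map_one, Nat.cast_add, Nat.cast_one] at ih hb ⊢
    linear_combination 108 * (X + (n : Polynomial ℚ) + 1) * ih - 6 * hb

lemma Bf_succ (n : ℕ) : Bf (n + 1) = 18 * cst (bSeq n) + 108 * (Xr + (n + 1)) * Bf n := by
  simp [Bf, Bpoly_succ, cst, Xr, map_ofNat]

lemma Bf_functional_eq (n : ℕ) :
    (36 * Xr ^ 2 - 1) * Bf n - 36 * (Xr + n) * (Xr - 1) * BfShiftDown n = 6 * n * cst (bSeq n) := by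
  simpa [Bf, BfShiftDown, cst, Xr, map_ofNat] using
    congrArg (algebraMap ℚ[X] (RatFunc ℚ)) (Bpoly_functional_eq n)

lemma cst_mul_Xr_add_cst_ne_zero {a : ℚ} (b : ℚ) (ha : a ≠ 0) : cst a * Xr + cst b ≠ 0 := by
  rw [show cst a * Xr + cst b = algebraMap ℚ[X] _ (C a * X + C b) by simp [cst, Xr]]
  exact RatFunc.algebraMap_ne_zero fun h => by simpa [h] using degree_linear (b := b) ha

/-- The identity in `ℚ(x)`, for `n ≥ 1`:
`B_n(x) + b_n/(6x−1) = −(B_n(x) + b_n/(6x+1))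
 + (12(x+n)(x−1)(6x−5)/((x+n−1)(6x+1)(6x−1)))·(B_n(x−1) + b_n/(6x−5))
 + 18(6n−1)·(2(x+n)/(x+n−1))·(B_{n−1}(x) + b_{n−1}/(6x−1))`. -/
theorem stmt5 (n : ℕ) (hn : 1 ≤ n) :
    Bf n + cst (bSeq n) / (6*Xr-1)
      = -(Bf n + cst (bSeq n) / (6*Xr+1))
        + (12 * (Xr + (n : RatFunc ℚ)) * (Xr - 1) * (6*Xr-5)
            / ((Xr + (n : RatFunc ℚ) - 1) * (6*Xr+1) * (6*Xr-1)))
          * (BfShiftDown n + cst (bSeq n) / (6*Xr-5))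
        + 18 * (6*(n : RatFunc ℚ) - 1) * (2 * (Xr + (n : RatFunc ℚ)) / (Xr + (n : RatFunc ℚ) - 1))
          * (Bf (n-1) + cst (bSeq (n-1)) / (6*Xr-1)) := by
  obtain ⟨m, rfl⟩ : ∃ m, n = m + 1 := ⟨n - 1, by omega⟩
  have hrec := Bf_succ m
  have hfun := Bf_functional_eq (m + 1)
  have hb : (m + 1) * cst (bSeq (m + 1)) = 3 * (6 * m + 5) * (6 * m + 7) * cst (bSeq m) := by
    simpa [cst, map_ofNat] using congrArg cst (bSeq_succ m)
  have hsix : (6 : ℚ) ≠ 0 := by norm_num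
  have hd₁ : 6 * Xr - 1 ≠ 0 := by
    simpa [cst, map_ofNat, sub_eq_add_neg] using cst_mul_Xr_add_cst_ne_zero (-1) hsix
  have hd₂ : 6 * Xr + 1 ≠ 0 := by
    simpa [cst, map_ofNat] using cst_mul_Xr_add_cst_ne_zero 1 hsix
  have hd₃ : 6 * Xr - 5 ≠ 0 := by
    simpa [cst, map_ofNat, sub_eq_add_neg] using cst_mul_Xr_add_cst_ne_zero (-5) hsix
  have hd₄ : Xr + m ≠ 0 := by
    simpa [cst] using cst_mul_Xr_add_cst_ne_zero (m : ℚ) one_ne_zero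
  have hshift : Xr + ((m : RatFunc ℚ) + 1) - 1 = Xr + m := by ring
  simp only [Nat.add_sub_cancel, Nat.cast_add, Nat.cast_one, hshift] at hfun ⊢
  field_simp
  linear_combination (6 * Xr - 5) / 3 * hfun + (6 * m + 5) * (36 * Xr ^ 2 - 1) / 3 * hrec
    + (12 * Xr + 2) * hb
end

section
/- With A_{m,n} as defined above, A_{0,3m−1} = (−1)^{3m−1}·(−√−2/144)^m·(6m−1)!!/(2m)! and A_{3m−1,0} = (−√−2/144)^m·(6m−1)!!/(2m)! for all m ≥ 1. -/
/-- `B_n(x) = (1/6)·Σ_{j=1}^{n} 108^j·b_{n−j}·(x+n)_{[j−1]}`, as a function of `x`,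
where `(a)_{[j]} = a(a−1)···(a−j+1)` is the falling factorial. -/
def Bval (n : ℕ) (x : ℚ) : ℚ :=
  (1/6 : ℚ) * ∑ j ∈ Finset.Icc 1 n,
    (108:ℚ)^j * bSeq (n-j) * ∏ i ∈ Finset.range (j-1), (x + n - i)

/-- The value `A_{3m−1,3n} = A_{3m−3,3n+2}`:
`(−1)^n·(−s/144)^{m+n}·((6m+1)!!/(2(m+n))!)·Π_{j=0}^{n−1}(m+j)·Π_{j=1}^{n}(2m+2j−1)
  ·(B_n(m) + b_n/(6m+1))`, where `s` is a fixed square root of `−2`. -/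
noncomputable def Fcoef (s : ℂ) (m n : ℕ) : ℂ :=
  (-1)^n * (-s/144)^(m+n) * ((oddFac (3*m) : ℂ) / ((2*(m+n)).factorial : ℂ))
    * (∏ j ∈ Finset.range n, ((m:ℂ) + j))
    * (∏ j ∈ Finset.range n, (2*(m:ℂ) + 2*((j:ℂ)+1) - 1))
    * ((Bval n m : ℂ) + (bSeq n : ℂ) / (6*(m:ℂ)+1))

/-- The value `A_{3m−2,3n+1}`:
`(−1)^{n+1}·(−s/144)^{m+n}·((6m+1)!!/(2(m+n))!)·Π_{j=0}^{n−1}(m+j)·Π_{j=1}^{n}(2m+2j−1)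
  ·(B_n(m) + b_n/(6m−1))`. -/
noncomputable def Gcoef (s : ℂ) (m n : ℕ) : ℂ :=
  (-1)^(n+1) * (-s/144)^(m+n) * ((oddFac (3*m) : ℂ) / ((2*(m+n)).factorial : ℂ))
    * (∏ j ∈ Finset.range n, ((m:ℂ) + j))
    * (∏ j ∈ Finset.range n, (2*(m:ℂ) + 2*((j:ℂ)+1) - 1))
    * ((Bval n m : ℂ) + (bSeq n : ℂ) / (6*(m:ℂ)-1))

/-- The coefficients `A_{p,q}` (`p, q ∈ ℤ`): zero if `p < 0` or `q < 0`, zero unless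
`p + q ≡ −1 (mod 3)`, and otherwise given by the closed formulas: writing
`(p,q) = (3m−1,3n)`, `(3m−3,3n+2)` or `(3m−2,3n+1)` with `m ≥ 1`, `n ≥ 0`,
`A_{3m−1,3n} = A_{3m−3,3n+2} = Fcoef s m n` and `A_{3m−2,3n+1} = Gcoef s m n`. -/
noncomputable def Acoef (s : ℂ) (p q : ℤ) : ℂ :=
  if p < 0 ∨ q < 0 then 0
  else if p % 3 = 2 ∧ q % 3 = 0 then Fcoef s ((p+1)/3).toNat (q/3).toNat
  else if p % 3 = 0 ∧ q % 3 = 2 then Fcoef s ((p/3).toNat + 1) ((q-2)/3).toNat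
  else if p % 3 = 1 ∧ q % 3 = 1 then Gcoef s ((p+2)/3).toNat ((q-1)/3).toNat
  else 0

lemma oddFac_succ (k : ℕ) : oddFac (k+1) = oddFac k * (2*(k+1)+1) := by
  simp [oddFac, Finset.prod_range_succ]

lemma oddFacQ_add3 (n : ℕ) : (oddFac (3*n+3) : ℚ)
    = oddFac (3*n) * ((6*n+3) * (6*n+5) * (6*n+7)) := by
  rw [show 3*n+3 = (3*n+2)+1 from rfl, oddFac_succ,
      show 3*n+2 = (3*n+1)+1 from rfl, oddFac_succ,
      show 3*n+1 = (3*n)+1 from rfl, oddFac_succ]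
  push_cast; ring

lemma keyQ (n : ℕ) : (2:ℚ)^n * n.factorial * oddFac n = (2*n+1) * (2*n).factorial := by
  induction n with
  | zero => simp [oddFac]
  | succ n ih =>
    have h1 : (oddFac (n+1) : ℚ) = oddFac n * (2*n+3) := by rw [oddFac_succ]; push_cast; ring
    have h2 : ((n+1).factorial : ℚ) = (n+1) * n.factorial := by
      rw [Nat.factorial_succ]; push_cast; ring
    have h3 : ((2*(n+1)).factorial : ℚ) = (2*n+2) * ((2*n+1) * (2*n).factorial) := by
      rw [show 2*(n+1) = (2*n+1)+1 from by ring, Nat.factorial_succ, Nat.factorial_succ]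
      push_cast; ring
    rw [h1, h2, h3, pow_succ]
    push_cast
    linear_combination (2*((n:ℚ)+1)*(2*n+3)) * ih

lemma facQ_ne (k : ℕ) : ((k.factorial : ℚ)) ≠ 0 := Nat.cast_ne_zero.2 k.factorial_ne_zero

lemma bSeq_rec (n : ℕ) :
    bSeq (n+1) = bSeq n * (3*(6*(n:ℚ)+5)*(6*(n:ℚ)+7)) / ((n:ℚ)+1) := by
  unfold bSeq
  have h3 : (oddFac (3*(n+1)) : ℚ) = oddFac (3*n) * ((6*n+3) * (6*n+5) * (6*n+7)) := by
    rw [show 3*(n+1) = 3*n+3 from by ring]; exact oddFacQ_add3 n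
  have h4 : ((2*(n+1)).factorial : ℚ) = (2*n).factorial * ((2*n+1) * (2*n+2)) := by
    rw [show 2*(n+1) = (2*n+1)+1 from by ring, Nat.factorial_succ, Nat.factorial_succ]
    push_cast; ring
  rw [h3, h4, pow_succ]
  have hF := facQ_ne (2*n)
  have hn1 : ((n:ℚ)+1) ≠ 0 := by positivity
  have h5 : (2*(n:ℚ)+1) ≠ 0 := by positivity
  have h6 : (2*(n:ℚ)+2) ≠ 0 := by positivity
  field_simp
  ring

lemma S_eq (n : ℕ) :
    ∑ k ∈ Finset.range n, (108:ℚ)^(k+1) * bSeq (n-1-k) * ∏ i ∈ Finset.range k, ((n:ℚ)+1 - i)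
      = (108*(n:ℚ)/105) * bSeq n := by
  induction n with
  | zero => simp
  | succ n ih =>
    rw [Finset.sum_range_succ']
    have hterm : ∀ k ∈ Finset.range n,
        (108:ℚ)^(k+1+1) * bSeq (n+1-1-(k+1)) * ∏ i ∈ Finset.range (k+1), (((n+1:ℕ):ℚ)+1 - i)
          = (108*((n:ℚ)+2)) * ((108:ℚ)^(k+1) * bSeq (n-1-k) * ∏ i ∈ Finset.range k, ((n:ℚ)+1 - i)) := by
      intro k _
      have hp : ∏ i ∈ Finset.range (k+1), (((n+1:ℕ):ℚ)+1 - i)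
          = ((n:ℚ)+2) * ∏ i ∈ Finset.range k, ((n:ℚ)+1 - i) := by
        rw [Finset.prod_range_succ', mul_comm]
        congr 1
        · push_cast; ring
        · apply Finset.prod_congr rfl
          intro i _; push_cast; ring
      have harg : n+1-1-(k+1) = n-1-k := by omega
      rw [hp, harg, pow_succ]
      ring
    rw [Finset.sum_congr rfl hterm, ← Finset.mul_sum, ih]
    have h0 : (108:ℚ)^(0+1) * bSeq (n+1-1-0) * ∏ i ∈ Finset.range 0, (((n+1:ℕ):ℚ)+1 - i)
        = 108 * bSeq n := by simp
    rw [h0, bSeq_rec]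
    have hn1 : ((n:ℚ)+1) ≠ 0 := by positivity
    field_simp
    push_cast
    ring

lemma Bval_one (n : ℕ) : Bval n 1 = (6*(n:ℚ)/35) * bSeq n := by
  unfold Bval
  rw [← Finset.Ico_add_one_right_eq_Icc, Finset.sum_Ico_eq_sum_range]
  have hterm : ∀ k ∈ Finset.range (n+1-1),
      (108:ℚ)^(1+k) * bSeq (n-(1+k)) * ∏ i ∈ Finset.range (1+k-1), ((1:ℚ) + n - i)
        = (108:ℚ)^(k+1) * bSeq (n-1-k) * ∏ i ∈ Finset.range k, ((n:ℚ)+1 - i) := by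
    intro k _
    rw [show 1+k = k+1 from by omega, show n-(k+1) = n-1-k from by omega,
        show k+1-1 = k from by omega]
    congr 1
    apply Finset.prod_congr rfl
    intro i _; ring
  rw [Finset.sum_congr rfl hterm]
  rw [show n+1-1 = n from by omega, S_eq]
  ring

lemma keyQ2 (n : ℕ) :
    (105:ℚ) * n.factorial * oddFac n * ((6*(n:ℚ)/35) * bSeq n + bSeq n / 7)
      = oddFac (3*n+2) := by
  have hb : (n.factorial : ℚ) * oddFac n * bSeq n = (2*n+1) * oddFac (3*n) := by
    unfold bSeq
    have hF := facQ_ne (2*n)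
    field_simp
    linear_combination ((oddFac (3*n) : ℚ)) * keyQ n
  have h2 : (oddFac (3*n+2) : ℚ) = oddFac (3*n) * ((6*n+3) * (6*n+5)) := by
    rw [show 3*n+2 = (3*n+1)+1 from rfl, oddFac_succ, show 3*n+1 = (3*n)+1 from rfl, oddFac_succ]
    push_cast; ring
  rw [h2]
  linear_combination (3*(6*(n:ℚ)+5)) * hb

lemma prodP1 (n : ℕ) : ∏ j ∈ Finset.range n, ((1:ℂ) + j) = n.factorial := by
  induction n with
  | zero => simp
  | succ n ih => rw [Finset.prod_range_succ, ih, Nat.factorial_succ]; push_cast; ring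

lemma prodP2 (n : ℕ) :
    ∏ j ∈ Finset.range n, ((2:ℂ) + 2*((j:ℂ)+1) - 1) = oddFac n := by
  induction n with
  | zero => simp [oddFac]
  | succ n ih => rw [Finset.prod_range_succ, ih, oddFac_succ]; push_cast; ring

/-- For all `m ≥ 1`: `A_{0,3m−1} = (−1)^{3m−1}·(−√−2/144)^m·(6m−1)!!/(2m)!` and
`A_{3m−1,0} = (−√−2/144)^m·(6m−1)!!/(2m)!`, where `(6m−1)!! = oddFac (3m−1)`. -/
theorem stmt13 (s : ℂ) (hs : s^2 = -2) (m : ℕ) (hm : 1 ≤ m) :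
    Acoef s 0 (3*(m:ℤ)-1)
        = (-1:ℂ)^(3*m-1) * (-s/144)^m * ((oddFac (3*m-1) : ℂ) / ((2*m).factorial : ℂ)) ∧
      Acoef s (3*(m:ℤ)-1) 0
        = (-s/144)^m * ((oddFac (3*m-1) : ℂ) / ((2*m).factorial : ℂ)) := by
  have hm' : (1:ℤ) ≤ (m:ℤ) := by exact_mod_cast hm
  constructor
  · -- A_{0,3m-1} = Fcoef s 1 (m-1)
    obtain ⟨n, rfl⟩ : ∃ n, m = n+1 := ⟨m-1, by omega⟩
    have hA : Acoef s 0 (3*((n+1:ℕ):ℤ)-1) = Fcoef s 1 n := by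
      simp only [Acoef]
      rw [if_neg (by omega), if_neg (by omega), if_pos (by constructor <;> omega)]
      congr 1 <;> omega
    rw [hA]
    simp only [Fcoef, Nat.cast_one, Nat.cast_ofNat, mul_one]
    rw [prodP1, prodP2, Bval_one]
    have hkey : ((105:ℚ) * n.factorial * oddFac n * ((6*(n:ℚ)/35) * bSeq n + bSeq n / 7) : ℂ)
        = ((oddFac (3*n+2) : ℚ) : ℂ) := by exact_mod_cast congrArg (fun q : ℚ => (q:ℂ)) (keyQ2 n)
    push_cast at hkey
    have h3 : (oddFac (3*1) : ℂ) = 105 := by norm_num [oddFac, Finset.prod_range_succ]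
    have hsgn : (-1:ℂ)^(3*(n+1)-1) = (-1:ℂ)^n := by
      rw [show 3*(n+1)-1 = n + 2*(n+1) from by omega, pow_add, pow_mul]
      norm_num
    have hidx : 3*(n+1)-1 = 3*n+2 := by omega
    rw [hsgn, hidx, h3, show 1+n = n+1 from by omega]
    have hF : ((2*(n+1)).factorial : ℂ) ≠ 0 := Nat.cast_ne_zero.2 (Nat.factorial_ne_zero _)
    push_cast
    linear_combination ((-1:ℂ)^n * (-s/144)^(n+1) / ((2*(n+1)).factorial : ℂ)) * hkey
  · -- A_{3m-1,0} = Fcoef s m 0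
    have hA : Acoef s (3*(m:ℤ)-1) 0 = Fcoef s m 0 := by
      simp only [Acoef]
      rw [if_neg (by omega), if_pos (by constructor <;> omega)]
      congr 1 <;> omega
    rw [hA]
    simp only [Fcoef, Finset.range_zero, Finset.prod_empty, mul_one, Nat.add_zero, pow_zero, one_mul]
    have hB0 : Bval 0 (m:ℚ) = 0 := by simp [Bval]
    have hb0 : bSeq 0 = 1 := by norm_num [bSeq, oddFac]
    rw [hB0, hb0]
    have hodd : (oddFac (3*m) : ℂ) = oddFac (3*m-1) * (6*m+1) := by
      rw [show 3*m = (3*m-1)+1 from by omega, oddFac_succ]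
      push_cast [show 2*(3*m-1+1)+1 = 6*m+1 from by omega]
      ring
    have hF : ((2*m).factorial : ℂ) ≠ 0 := Nat.cast_ne_zero.2 (Nat.factorial_ne_zero _)
    have h6 : (6*(m:ℂ)+1) ≠ 0 := by
      have : ((6*m+1 : ℕ) : ℂ) ≠ 0 := Nat.cast_ne_zero.2 (by omega)
      push_cast at this; exact this
    rw [hodd]
    field_simp
    ring
end
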